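/- Let ℓ = (ℓ₁,…,ℓₙ) be ordered generic and let ℓ' = (ℓ₂,…,ℓ_{n−1}, ℓₙ+ℓ₁). If ℓ is special of type {i, n−2, n−1} with i ≥ 2, then ℓ' (of length n−1) is special of type {i−1, (n−1)−2, (n−1)−1}. Similarly, if n ≥ 6 and ℓ is special of type {n−4, n−3, n−1}, then ℓ' is special of type {(n−1)−4, (n−1)−3, (n−1)−1}. The key observation: a subset J ⊆ {2,…,n−1} is short with respect to ℓ if and only if the corresponding shifted subset is short with respect to ℓ'. -/

import Mathlib

open Finset

/-- The sum of `ℓ` over `J` is less than the sum over the complement in `{1,…,n}`. -/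
def Short (n : ℕ) (ℓ : ℕ → ℝ) (J : Finset ℕ) : Prop :=
  ∑ j ∈ J, ℓ j < ∑ j ∈ Finset.Icc 1 n \ J, ℓ j

/-- `J` is long iff its complement in `{1,…,n}` is short. -/
def Long (n : ℕ) (ℓ : ℕ → ℝ) (J : Finset ℕ) : Prop :=
  Short n ℓ (Finset.Icc 1 n \ J)

/-- All entries positive. -/
def LengthVec (n : ℕ) (ℓ : ℕ → ℝ) : Prop := ∀ i ∈ Finset.Icc 1 n, 0 < ℓ i

/-- `ℓ₁ ≤ … ≤ ℓₙ`. -/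
def OrderedVec (n : ℕ) (ℓ : ℕ → ℝ) : Prop :=
  ∀ i j : ℕ, 1 ≤ i → i ≤ j → j ≤ n → ℓ i ≤ ℓ j

/-- No subset has sum equal to the sum of its complement. -/
def Generic (n : ℕ) (ℓ : ℕ → ℝ) : Prop :=
  ∀ J ⊆ Finset.Icc 1 n, ∑ j ∈ J, ℓ j ≠ ∑ j ∈ Finset.Icc 1 n \ J, ℓ j

/-- Dominance order: an injective order-preserving map `φ : J₁ → J₂` with `x ≤ φ x`. -/
def DomLe (J₁ J₂ : Finset ℕ) : Prop :=
  ∃ φ : ℕ → ℕ, Set.InjOn φ ↑J₁ ∧ (∀ x ∈ J₁, φ x ∈ J₂) ∧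
    (∀ x ∈ J₁, ∀ y ∈ J₁, x < y → φ x < φ y) ∧ ∀ x ∈ J₁, x ≤ φ x

/-- `Ṡ_k(ℓ)`: subsets `J ⊆ {1,…,n−1}` of cardinality `k` with `J ∪ {n}` short. -/
def SdotSet (n : ℕ) (ℓ : ℕ → ℝ) (k : ℕ) : Set (Finset ℕ) :=
  {J | J ⊆ Finset.Icc 1 (n-1) ∧ J.card = k ∧ Short n ℓ (insert n J)}

/-- `Ṡ(ℓ)`: subsets `J ⊆ {1,…,n−1}` with `J ∪ {n}` short. -/
def Sdot (n : ℕ) (ℓ : ℕ → ℝ) : Set (Finset ℕ) :=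
  {J | J ⊆ Finset.Icc 1 (n-1) ∧ Short n ℓ (insert n J)}

/-- Special: `Ṡ_{n−3}(ℓ) = ∅ ≠ Ṡ_{n−4}(ℓ)`. -/
def SpecialVec (n : ℕ) (ℓ : ℕ → ℝ) : Prop :=
  SdotSet n ℓ (n-3) = ∅ ∧ SdotSet n ℓ (n-4) ≠ ∅

/-- `T` is the type of `ℓ`: the minimal three-element long subset of `{1,…,n−1}`. -/
def IsType (n : ℕ) (ℓ : ℕ → ℝ) (T : Finset ℕ) : Prop :=
  T ⊆ Finset.Icc 1 (n-1) ∧ T.card = 3 ∧ Long n ℓ T ∧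
    ∀ T' ⊆ Finset.Icc 1 (n-1), T'.card = 3 → Long n ℓ T' → DomLe T T'

/-!
Relabel index `j` of `ℓ'` as index `j + 1` of `ℓ`. Since `ℓ'` fuses `ℓ₁` into `ℓₙ` and keeps the
total length, a set `K ⊆ {1,…,n−2}` has the same `ℓ'`-length as `K + 1` has for `ℓ`, and
`K ∪ {n−1}` the same as `(K + 1) ∪ {1, n}`; so shortness and longness are transported. Thus
`Ṡ_k(ℓ')` corresponds to the members of `Ṡ_{k+1}(ℓ)` containing `1`, and as `ℓ₁` is the smallest
entry, a nonempty `Ṡ_{k+1}(ℓ)` always has such a member: this transports specialness. Three-element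
long sets and the dominance order between them are transported as well, which gives the type.
-/

theorem short_iff_two_mul_sum_lt {n : ℕ} {ℓ : ℕ → ℝ} {J : Finset ℕ} (hJ : J ⊆ Icc 1 n) :
    Short n ℓ J ↔ 2 * ∑ j ∈ J, ℓ j < ∑ j ∈ Icc 1 n, ℓ j := by
  rw [Short, sum_sdiff_eq_sub hJ, two_mul, lt_sub_iff_add_lt]

theorem long_iff_sum_lt_two_mul {n : ℕ} {ℓ : ℕ → ℝ} {J : Finset ℕ} (hJ : J ⊆ Icc 1 n) :
    Long n ℓ J ↔ ∑ j ∈ Icc 1 n, ℓ j < 2 * ∑ j ∈ J, ℓ j := by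
  rw [Long, short_iff_two_mul_sum_lt sdiff_subset, sum_sdiff_eq_sub hJ]
  constructor <;> intro <;> linarith

theorem Short.of_sum_le {n : ℕ} {ℓ : ℕ → ℝ} {A B : Finset ℕ} (hB : Short n ℓ B)
    (hA : A ⊆ Icc 1 n) (hB' : B ⊆ Icc 1 n) (hAB : ∑ j ∈ A, ℓ j ≤ ∑ j ∈ B, ℓ j) :
    Short n ℓ A := by
  rw [short_iff_two_mul_sum_lt hB'] at hB
  rw [short_iff_two_mul_sum_lt hA]
  linarith

theorem image_succ_subset_Icc {K : Finset ℕ} {a b : ℕ} (hK : K ⊆ Icc a b) :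
    K.image (· + 1) ⊆ Icc (a + 1) (b + 1) := by
  rw [← image_add_right_Icc]
  exact image_subset_image hK

theorem exists_image_succ_eq {J : Finset ℕ} {a b : ℕ} (hJ : J ⊆ Icc (a + 1) (b + 1)) :
    ∃ K ⊆ Icc a b, K.image (· + 1) = J := by
  rwa [← image_add_right_Icc, subset_image_iff] at hJ

theorem image_pred_image_succ (K : Finset ℕ) : (K.image (· + 1)).image (· - 1) = K := by
  simp [image_image, Function.comp_def]

theorem DomLe.of_image_succ {A B : Finset ℕ}
    (h : DomLe (A.image (· + 1)) (B.image (· + 1))) : DomLe A B := by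
  obtain ⟨φ, -, hmaps, hmono, hle⟩ := h
  have hφ : ∀ x ∈ A, x + 1 ≤ φ (x + 1) := fun x hx => hle _ (mem_image_of_mem _ hx)
  have hmono' : StrictMonoOn (fun x => φ (x + 1) - 1) A := fun x hx y hy hxy => by
    show φ (x + 1) - 1 < φ (y + 1) - 1
    have := hmono _ (mem_image_of_mem _ hx) _ (mem_image_of_mem _ hy) (by omega)
    have := hφ x hx
    omega
  refine ⟨_, hmono'.injOn, fun x hx => ?_, fun x hx y hy => hmono' hx hy,
    fun x hx => by have := hφ x hx; omega⟩
  obtain ⟨b, hb, hφb⟩ := mem_image.1 (hmaps _ (mem_image_of_mem _ hx))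
  simpa [← hφb] using hb

theorem insert_subset_Icc_of_subset_Icc_pred {n : ℕ} {J : Finset ℕ} (hn : 1 ≤ n)
    (hJ : J ⊆ Icc 1 (n - 1)) : insert n J ⊆ Icc 1 n :=
  insert_subset (by simp [hn]) (hJ.trans (Icc_subset_Icc_right (Nat.sub_le n 1)))

theorem exists_one_mem_of_mem_sdotSet {n k : ℕ} {ℓ : ℕ → ℝ} {J : Finset ℕ}
    (hord : OrderedVec n ℓ) (hk : 1 ≤ k) (hJ : J ∈ SdotSet n ℓ k) :
    ∃ J' ∈ SdotSet n ℓ k, 1 ∈ J' := by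
  by_cases h1 : 1 ∈ J
  · exact ⟨J, hJ, h1⟩
  obtain ⟨hsub, hcard, hshort⟩ := hJ
  obtain ⟨a, ha⟩ := card_pos.1 (hcard ▸ hk : 0 < J.card)
  have ha' := mem_Icc.1 (hsub ha)
  have hn : n ∉ J := fun h => by have := mem_Icc.1 (hsub h); omega
  have h1' : 1 ∉ J.erase a := fun h => h1 (mem_of_mem_erase h)
  set J' := insert 1 (J.erase a)
  have hJ'sub : J' ⊆ Icc 1 (n - 1) := insert_subset (by simp; omega) ((erase_subset _ _).trans hsub)
  have hJ'card : J'.card = k := by rw [card_insert_of_notMem h1', card_erase_of_mem ha]; omega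
  -- replacing `a` by `1` can only shorten a set, as `ℓ 1 ≤ ℓ a`
  have hsum : ∑ j ∈ insert n J', ℓ j ≤ ∑ j ∈ insert n J, ℓ j := by
    have hn' : n ∉ J' := by simpa [J', hn] using (by omega : n ≠ 1)
    rw [sum_insert hn', sum_insert h1', sum_insert hn, ← add_sum_erase _ _ ha]
    linarith [hord 1 a le_rfl ha'.1 (by omega)]
  refine ⟨J', ⟨hJ'sub, hJ'card, hshort.of_sum_le ?_ ?_ hsum⟩, mem_insert_self _ _⟩
  · exact insert_subset_Icc_of_subset_Icc_pred (by omega) hJ'sub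
  · exact insert_subset_Icc_of_subset_Icc_pred (by omega) hsub

/-- The paper's `ℓ' = (ℓ₂,…,ℓ_{n−1},ℓₙ+ℓ₁)`, indexed by `{1,…,n−1}`. -/
def absorbFirst (n : ℕ) (ℓ : ℕ → ℝ) : ℕ → ℝ :=
  fun j => if j = n - 1 then ℓ n + ℓ 1 else ℓ (j + 1)

section absorbFirst

variable {n : ℕ} {ℓ : ℕ → ℝ}

theorem sum_absorbFirst {J : Finset ℕ} (hJ : n - 1 ∉ J) :
    ∑ j ∈ J, absorbFirst n ℓ j = ∑ j ∈ J.image (· + 1), ℓ j := by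
  rw [sum_image (add_left_injective 1).injOn]
  exact sum_congr rfl fun j hj => if_neg (ne_of_mem_of_not_mem hj hJ)

theorem sum_insert_absorbFirst (hn : 2 ≤ n) {J : Finset ℕ} (h0 : 0 ∉ J) (hJ : n - 1 ∉ J) :
    ∑ j ∈ insert (n - 1) J, absorbFirst n ℓ j =
      ∑ j ∈ insert n (insert 1 (J.image (· + 1))), ℓ j := by
  have h1 : 1 ∉ J.image (· + 1) := by simpa using h0
  have hn' : n ∉ insert 1 (J.image (· + 1)) := by
    simp only [mem_insert, mem_image, not_or, not_exists, not_and]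
    exact ⟨by omega, fun x hx hxn => hJ (by rwa [← hxn, Nat.add_sub_cancel])⟩
  rw [sum_insert hJ, sum_insert hn', sum_insert h1, sum_absorbFirst hJ, absorbFirst, if_pos rfl]
  ring

theorem sum_Icc_absorbFirst (hn : 2 ≤ n) :
    ∑ j ∈ Icc 1 (n - 1), absorbFirst n ℓ j = ∑ j ∈ Icc 1 n, ℓ j := by
  have h := sum_insert_absorbFirst (ℓ := ℓ) hn (J := Icc 1 (n - 2)) (by simp) (by simp; omega)
  rw [image_add_right_Icc] at h
  convert h using 2 <;> ext <;> simp only [mem_insert, mem_Icc] <;> omega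

theorem short_absorbFirst_iff_of_sum_eq (hn : 2 ≤ n) {A B : Finset ℕ} (hA : A ⊆ Icc 1 (n - 1))
    (hB : B ⊆ Icc 1 n) (h : ∑ j ∈ A, absorbFirst n ℓ j = ∑ j ∈ B, ℓ j) :
    Short (n - 1) (absorbFirst n ℓ) A ↔ Short n ℓ B := by
  rw [short_iff_two_mul_sum_lt hA, short_iff_two_mul_sum_lt hB, h, sum_Icc_absorbFirst hn]

theorem long_absorbFirst_iff_of_sum_eq (hn : 2 ≤ n) {A B : Finset ℕ} (hA : A ⊆ Icc 1 (n - 1))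
    (hB : B ⊆ Icc 1 n) (h : ∑ j ∈ A, absorbFirst n ℓ j = ∑ j ∈ B, ℓ j) :
    Long (n - 1) (absorbFirst n ℓ) A ↔ Long n ℓ B := by
  rw [long_iff_sum_lt_two_mul hA, long_iff_sum_lt_two_mul hB, h, sum_Icc_absorbFirst hn]

variable {K : Finset ℕ}

theorem insert_one_image_succ_subset_Icc (hn : 2 ≤ n) (hK : K ⊆ Icc 1 (n - 2)) :
    insert 1 (K.image (· + 1)) ⊆ Icc 1 (n - 1) :=
  insert_subset (by simp; omega)
    ((image_succ_subset_Icc hK).trans (Icc_subset_Icc (by omega) (by omega)))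

theorem short_absorbFirst_iff (hn : 2 ≤ n) (hK : K ⊆ Icc 1 (n - 2)) :
    Short (n - 1) (absorbFirst n ℓ) K ↔ Short n ℓ (K.image (· + 1)) :=
  short_absorbFirst_iff_of_sum_eq hn (hK.trans (Icc_subset_Icc_right (by omega)))
    ((image_succ_subset_Icc hK).trans (Icc_subset_Icc (by omega) (by omega)))
    (sum_absorbFirst fun h => by have := mem_Icc.1 (hK h); omega)

theorem long_absorbFirst_iff (hn : 2 ≤ n) (hK : K ⊆ Icc 1 (n - 2)) :
    Long (n - 1) (absorbFirst n ℓ) K ↔ Long n ℓ (K.image (· + 1)) :=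
  long_absorbFirst_iff_of_sum_eq hn (hK.trans (Icc_subset_Icc_right (by omega)))
    ((image_succ_subset_Icc hK).trans (Icc_subset_Icc (by omega) (by omega)))
    (sum_absorbFirst fun h => by have := mem_Icc.1 (hK h); omega)

theorem short_insert_absorbFirst_iff (hn : 2 ≤ n) (hK : K ⊆ Icc 1 (n - 2)) :
    Short (n - 1) (absorbFirst n ℓ) (insert (n - 1) K) ↔
      Short n ℓ (insert n (insert 1 (K.image (· + 1)))) := by
  refine short_absorbFirst_iff_of_sum_eq hn ?_ ?_ (sum_insert_absorbFirst hn ?_ ?_)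
  · exact insert_subset (by simp; omega) (hK.trans (Icc_subset_Icc_right (by omega)))
  · exact insert_subset_Icc_of_subset_Icc_pred (by omega) (insert_one_image_succ_subset_Icc hn hK)
  · exact fun h => by have := mem_Icc.1 (hK h); omega
  · exact fun h => by have := mem_Icc.1 (hK h); omega

theorem insert_one_image_succ_mem_sdotSet_iff (hn : 2 ≤ n) (hK : K ⊆ Icc 1 (n - 2)) (k : ℕ) :
    insert 1 (K.image (· + 1)) ∈ SdotSet n ℓ (k + 1) ↔ K ∈ SdotSet (n - 1) (absorbFirst n ℓ) k := by
  have h1 : 1 ∉ K.image (· + 1) := by simpa using fun h => by have := mem_Icc.1 (hK h); omega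
  have hsub := insert_one_image_succ_subset_Icc hn hK
  have hsub' : K ⊆ Icc 1 (n - 1 - 1) := by rwa [Nat.sub_sub]
  simp only [SdotSet, Set.mem_ofPred_eq, card_insert_of_notMem h1,
    card_image_of_injective _ (add_left_injective 1), add_left_inj,
    short_insert_absorbFirst_iff hn hK, hsub, hsub', true_and]

theorem specialVec_absorbFirst (hn : 5 ≤ n) (hord : OrderedVec n ℓ) (hsp : SpecialVec n ℓ) :
    SpecialVec (n - 1) (absorbFirst n ℓ) := by
  obtain ⟨hempty, hne⟩ := hsp
  constructor
  · refine Set.eq_empty_iff_forall_notMem.2 fun K hK => ?_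
    have hKsub : K ⊆ Icc 1 (n - 2) := by simpa [Nat.sub_sub] using hK.1
    rw [show n - 1 - 3 = n - 4 by omega,
      ← insert_one_image_succ_mem_sdotSet_iff (by omega) hKsub, show n - 4 + 1 = n - 3 by omega,
      hempty] at hK
    exact hK
  · obtain ⟨J, hJ, h1J⟩ := exists_one_mem_of_mem_sdotSet hord (by omega)
      (Set.nonempty_iff_ne_empty.2 hne).some_mem
    have hJ' : J.erase 1 ⊆ Icc (1 + 1) (n - 2 + 1) := fun x hx => by
      have := mem_Icc.1 (hJ.1 (mem_of_mem_erase hx))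
      have := ne_of_mem_erase hx
      simp only [mem_Icc]
      omega
    obtain ⟨K, hK, hKJ⟩ := exists_image_succ_eq hJ'
    refine Set.nonempty_iff_ne_empty.1 ⟨K, ?_⟩
    rw [show n - 1 - 4 = n - 5 by omega,
      ← insert_one_image_succ_mem_sdotSet_iff (by omega) hK, hKJ, insert_erase h1J,
      show n - 5 + 1 = n - 4 by omega]
    exact hJ

theorem isType_absorbFirst (hn : 2 ≤ n) (hK : K ⊆ Icc 1 (n - 2))
    (hty : IsType n ℓ (K.image (· + 1))) : IsType (n - 1) (absorbFirst n ℓ) K := by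
  have hsucc := add_left_injective (1 : ℕ)
  obtain ⟨-, hcard, hlong, hmin⟩ := hty
  refine ⟨by rwa [Nat.sub_sub], by rwa [card_image_of_injective _ hsucc] at hcard,
    (long_absorbFirst_iff hn hK).2 hlong, fun T hT hTcard hTlong => ?_⟩
  rw [Nat.sub_sub] at hT
  refine DomLe.of_image_succ (hmin _ ?_ (by rwa [card_image_of_injective _ hsucc])
    ((long_absorbFirst_iff hn hT).1 hTlong))
  exact (image_succ_subset_Icc hT).trans (Icc_subset_Icc (by omega) (by omega))

end absorbFirst

theorem type_induction_general (n : ℕ) (ℓ : ℕ → ℝ) (hn : 5 ≤ n)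
    (hord : OrderedVec n ℓ)
    (ℓ' : ℕ → ℝ)
    (hℓ' : ℓ' = fun j => if j = n-1 then ℓ n + ℓ 1 else ℓ (j+1)) :
    (∀ J ⊆ Finset.Icc 2 (n-1),
      (Short n ℓ J ↔ Short (n-1) ℓ' (J.image (fun i => i - 1)))) ∧
    (∀ i : ℕ, 2 ≤ i → i ≤ n-4 → SpecialVec n ℓ → IsType n ℓ {i, n-2, n-1} →
      SpecialVec (n-1) ℓ' ∧ IsType (n-1) ℓ' {i-1, n-3, n-2}) ∧
    (6 ≤ n → SpecialVec n ℓ → IsType n ℓ {n-4, n-3, n-1} →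
      SpecialVec (n-1) ℓ' ∧ IsType (n-1) ℓ' {n-5, n-4, n-2}) := by
  obtain rfl : ℓ' = absorbFirst n ℓ := hℓ'
  refine ⟨fun J hJ => ?_, fun i hi2 hi4 hsp hty => ⟨specialVec_absorbFirst hn hord hsp, ?_⟩,
    fun hn6 hsp hty => ⟨specialVec_absorbFirst hn hord hsp, ?_⟩⟩
  · obtain ⟨K, hK, rfl⟩ := exists_image_succ_eq (a := 1) (b := n - 2)
      (hJ.trans (Icc_subset_Icc le_rfl (by omega)))
    rw [image_pred_image_succ]
    exact (short_absorbFirst_iff (by omega) hK).symm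
  · refine isType_absorbFirst (by omega) ?_ ?_
    · simp only [insert_subset_iff, singleton_subset_iff, mem_Icc]
      omega
    · convert hty using 1
      simp only [image_insert, image_singleton]
      rw [show i - 1 + 1 = i by omega, show n - 3 + 1 = n - 2 by omega,
        show n - 2 + 1 = n - 1 by omega]
  · refine isType_absorbFirst (by omega) ?_ ?_
    · simp only [insert_subset_iff, singleton_subset_iff, mem_Icc]
      omega
    · convert hty using 1
      simp only [image_insert, image_singleton]
      rw [show n - 5 + 1 = n - 4 by omega, show n - 4 + 1 = n - 3 by omega,
        show n - 2 + 1 = n - 1 by omega]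

/-- Passing from ℓ to ℓ' = (ℓ₂,…,ℓ_{n−1},ℓₙ+ℓ₁): a subset
J ⊆ {2,…,n−1} is short w.r.t. ℓ iff the shifted subset is short w.r.t. ℓ'; if ℓ
is special of type {i,n−2,n−1} with i ≥ 2 then ℓ' is special of type
{i−1,n−3,n−2}; and if n ≥ 6 and ℓ is special of type {n−4,n−3,n−1} then ℓ' is
special of type {n−5,n−4,n−2}. -/
theorem type_induction (n : ℕ) (ℓ : ℕ → ℝ) (hn : 5 ≤ n)
    (hpos : LengthVec n ℓ) (hord : OrderedVec n ℓ) (hgen : Generic n ℓ)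
    (ℓ' : ℕ → ℝ)
    (hℓ' : ℓ' = fun j => if j = n-1 then ℓ n + ℓ 1 else ℓ (j+1)) :
    (∀ J ⊆ Finset.Icc 2 (n-1),
      (Short n ℓ J ↔ Short (n-1) ℓ' (J.image (fun i => i - 1)))) ∧
    (∀ i : ℕ, 2 ≤ i → i ≤ n-4 → SpecialVec n ℓ → IsType n ℓ {i, n-2, n-1} →
      SpecialVec (n-1) ℓ' ∧ IsType (n-1) ℓ' {i-1, n-3, n-2}) ∧
    (6 ≤ n → SpecialVec n ℓ → IsType n ℓ {n-4, n-3, n-1} →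
      SpecialVec (n-1) ℓ' ∧ IsType (n-1) ℓ' {n-5, n-4, n-2}) :=
  type_induction_general n ℓ hn hord ℓ' hℓ'
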